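/- arXiv:1704.07104 — 3 statements merged into one kernel-verified Lean document; each statement's English description precedes it below -/
import Mathlib

section
/- (Key step for Lemma on forced monotone boxes) Let m = (σ, R) be a mesh pattern with ⟨a,b⟩ ∉ R, and let π be a classical pattern contained in σ^{⟨a,b⟩_a}, the pattern obtained by inserting an ascent into box ⟨a,b⟩ of m. Then in any occurrence of m in a permutation ρ avoiding π, the points of ρ lying in the region corresponding to box ⟨a,b⟩ form a (possibly empty) decreasing subsequence of ρ. -/
def extFun {k n : ℕ} (α : Fin k → Fin n) : ℕ → ℕ := fun i =>
  if h0 : i = 0 then 0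
  else if h1 : i ≤ k then ((α ⟨i - 1, by omega⟩ : Fin n) : ℕ) + 1
  else n + 1

/-- An occurrence of the mesh pattern `(τ, R)` in `π` given by index/value
injections `α`, `β` (using 1-indexed coordinates for the regions). -/
def MeshOcc {k n : ℕ} (τ : Equiv.Perm (Fin k)) (R : Finset (ℕ × ℕ))
    (π : Equiv.Perm (Fin n)) (α β : Fin k → Fin n) : Prop :=
  StrictMono α ∧ StrictMono β ∧ (∀ i, π (α i) = β (τ i)) ∧
    ∀ p ∈ R, ∀ x : Fin n,
      ¬(extFun α p.1 < (x : ℕ) + 1 ∧ (x : ℕ) + 1 < extFun α (p.1 + 1) ∧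
        extFun β p.2 < (π x : ℕ) + 1 ∧ (π x : ℕ) + 1 < extFun β (p.2 + 1))

def ContainsMesh {k n : ℕ} (τ : Equiv.Perm (Fin k)) (R : Finset (ℕ × ℕ))
    (π : Equiv.Perm (Fin n)) : Prop :=
  ∃ α β : Fin k → Fin n, MeshOcc τ R π α β

def AvoidsMesh {k n : ℕ} (τ : Equiv.Perm (Fin k)) (R : Finset (ℕ × ℕ))
    (π : Equiv.Perm (Fin n)) : Prop :=
  ¬ ContainsMesh τ R π

/-- The classical pattern `τ` is contained in `f`. -/
def ContainsPat {k n : ℕ} (τ : Fin k → Fin k) (f : Fin n → Fin n) : Prop :=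
  ∃ α : Fin k → Fin n, StrictMono α ∧ ∀ i j : Fin k, τ i < τ j ↔ f (α i) < f (α j)

/-- The permutation `σ^{⟨a,b⟩_a}` of length `m+2` obtained by inserting an
ascent into the box `⟨a,b⟩` of `σ` (0-indexed boxes). -/
def insertAscent {m : ℕ} (σ : Equiv.Perm (Fin m)) (a b : Fin (m + 1)) :
    Fin (m + 2) → Fin (m + 2) := fun x =>
  if h0 : (x : ℕ) = a then ⟨b, by have := b.isLt; omega⟩
  else if h1 : (x : ℕ) = (a : ℕ) + 1 then ⟨(b : ℕ) + 1, by have := b.isLt; omega⟩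
  else if h2 : (x : ℕ) < a then
    have hx : (x : ℕ) < m := by have := a.isLt; omega
    if (σ ⟨x, hx⟩ : ℕ) < b then ⟨σ ⟨x, hx⟩, by have := (σ ⟨x, hx⟩).isLt; omega⟩
    else ⟨(σ ⟨x, hx⟩ : ℕ) + 2, by have := (σ ⟨x, hx⟩).isLt; omega⟩
  else
    have hx : (x : ℕ) - 2 < m := by have := x.isLt; omega
    if (σ ⟨(x : ℕ) - 2, hx⟩ : ℕ) < b then
      ⟨σ ⟨(x : ℕ) - 2, hx⟩, by have := (σ ⟨(x : ℕ) - 2, hx⟩).isLt; omega⟩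
    else ⟨(σ ⟨(x : ℕ) - 2, hx⟩ : ℕ) + 2, by have := (σ ⟨(x : ℕ) - 2, hx⟩).isLt; omega⟩

/-!
If two points `x < y` of the box region formed an ascent `ρ x < ρ y`, adding them to the
occurrence `(α, β)` of `σ` would give an occurrence of the classical pattern `σ^{⟨a,b⟩_a}` in `ρ`:
on positions, `x, y` are inserted at places `a, a+1` of `α`, and on values `ρ x, ρ y` at places
`b, b+1` of `β`, exactly as the ascent is inserted into `σ`. Composing with an occurrence of `π`
in `σ^{⟨a,b⟩_a}` then gives an occurrence of `π` in `ρ`.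
-/

theorem Fin.comp_insertNth {n : ℕ} {X Y : Type*} (g : X → Y) (i : Fin (n + 1)) (x : X)
    (p : Fin n → X) : g ∘ Fin.insertNth i x p = Fin.insertNth i (g x) (g ∘ p) := by
  funext j
  induction j using Fin.succAboveCases i <;> simp

theorem Fin.strictMono_insertNth_of_lt {n : ℕ} {X : Type*} [Preorder X] {f : Fin n → X}
    (hf : StrictMono f) (i : Fin (n + 1)) (x : X)
    (hlt : ∀ j : Fin n, j.castSucc < i → f j < x) (hgt : ∀ j : Fin n, i ≤ j.castSucc → x < f j) :
    StrictMono (Fin.insertNth i x f) := by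
  intro p q hpq
  induction p using Fin.succAboveCases i with
  | x =>
    induction q using Fin.succAboveCases i with
    | x => exact absurd hpq (lt_irrefl _)
    | p k =>
      rw [Fin.insertNth_apply_same, Fin.insertNth_apply_succAbove]
      exact hgt k (by simpa [Fin.lt_succAbove_iff_le_castSucc] using hpq)
  | p j =>
    induction q using Fin.succAboveCases i with
    | x =>
      rw [Fin.insertNth_apply_same, Fin.insertNth_apply_succAbove]
      exact hlt j (by simpa [Fin.succAbove_lt_iff_castSucc_lt] using hpq)
    | p k =>
      simp only [Fin.insertNth_apply_succAbove]
      exact hf ((Fin.strictMono_succAbove i).lt_iff_lt.mp hpq)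

section InsertTwo

variable {m : ℕ} {X Y : Type*}

def insertTwo (a : Fin (m + 1)) (x y : X) (f : Fin m → X) : Fin (m + 2) → X :=
  Fin.insertNth a.castSucc x (Fin.insertNth a y f)

def skipTwo (b : Fin (m + 1)) : Fin m → Fin (m + 2) :=
  b.castSucc.succAbove ∘ b.succAbove

theorem comp_insertTwo (g : X → Y) (a : Fin (m + 1)) (x y : X) (f : Fin m → X) :
    g ∘ insertTwo a x y f = insertTwo a (g x) (g y) (g ∘ f) := by
  simp only [insertTwo, Fin.comp_insertNth]

@[simp] theorem insertTwo_castSucc (a : Fin (m + 1)) (x y : X) (f : Fin m → X) :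
    insertTwo a x y f a.castSucc = x := by
  simp [insertTwo]

@[simp] theorem insertTwo_succ (a : Fin (m + 1)) (x y : X) (f : Fin m → X) :
    insertTwo a x y f a.succ = y := by
  rw [insertTwo, ← Fin.succAbove_castSucc_self, Fin.insertNth_apply_succAbove]
  simp

@[simp] theorem insertTwo_skipTwo (a : Fin (m + 1)) (x y : X) (f : Fin m → X) (i : Fin m) :
    insertTwo a x y f (skipTwo a i) = f i := by
  simp [insertTwo, skipTwo]

theorem insertTwo_comp_skipTwo (a : Fin (m + 1)) (x y : X) (f : Fin m → X) :
    insertTwo a x y f ∘ skipTwo a = f :=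
  funext (insertTwo_skipTwo a x y f)

theorem val_skipTwo (b : Fin (m + 1)) (i : Fin m) :
    (skipTwo b i : ℕ) = if (i : ℕ) < b then (i : ℕ) else (i : ℕ) + 2 := by
  simp only [skipTwo, Function.comp_apply, Fin.succAbove, Fin.lt_def]
  split_ifs <;> simp_all
  omega

theorem strictMono_insertTwo [Preorder X] {f : Fin m → X} (hf : StrictMono f) (a : Fin (m + 1))
    {x y : X} (hxy : x < y) (hlt : ∀ j : Fin m, j.castSucc < a → f j < x)
    (hgt : ∀ j : Fin m, a ≤ j.castSucc → y < f j) :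
    StrictMono (insertTwo a x y f) := by
  have hg : StrictMono (Fin.insertNth a y f) :=
    Fin.strictMono_insertNth_of_lt hf a y (fun j hj => (hlt j hj).trans hxy) hgt
  refine Fin.strictMono_insertNth_of_lt hg a.castSucc x (fun j hj => ?_) (fun j hj => ?_)
  · have hja : j < a := Fin.castSucc_lt_castSucc_iff.mp hj
    obtain ⟨j, rfl⟩ := Fin.exists_castSucc_eq.mpr (Fin.ne_last_of_lt hja)
    rw [← Fin.succAbove_of_castSucc_lt a j hja, Fin.insertNth_apply_succAbove]
    exact hlt j hja
  · exact hxy.trans_le (by simpa using hg.monotone (Fin.castSucc_le_castSucc_iff.mp hj))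

theorem insertAscent_eq_insertTwo (σ : Equiv.Perm (Fin m)) (a b : Fin (m + 1)) :
    insertAscent σ a b = insertTwo a b.castSucc b.succ (skipTwo b ∘ σ) := by
  funext t
  induction t using Fin.succAboveCases a.castSucc with
  | x => ext; simp [insertAscent]
  | p s =>
    induction s using Fin.succAboveCases a with
    | x => ext; simp [insertAscent]
    | p i =>
      rw [← Function.comp_apply (f := a.castSucc.succAbove), ← skipTwo, insertTwo_skipTwo]
      ext
      rw [Function.comp_apply, val_skipTwo b (σ i)]
      have hσi := (σ i).isLt
      by_cases hi : (i : ℕ) < a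
      · have ht : (skipTwo a i : ℕ) = i := by simp [val_skipTwo, hi]
        simp only [insertAscent, ht, hi]
        split_ifs <;> simp_all
      · have ht : (skipTwo a i : ℕ) = i + 2 := by simp [val_skipTwo, hi]
        simp only [insertAscent, ht]
        split_ifs <;> simp_all <;> omega

theorem insertTwo_comp_insertAscent (σ : Equiv.Perm (Fin m)) (a b : Fin (m + 1)) (g : X → Y)
    (f : Fin m → X) (h : Fin m → Y) (hfh : g ∘ f = h ∘ σ) (x y : X) :
    insertTwo b (g x) (g y) h ∘ insertAscent σ a b = g ∘ insertTwo a x y f := by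
  rw [insertAscent_eq_insertTwo, comp_insertTwo, comp_insertTwo, insertTwo_castSucc,
    insertTwo_succ, ← Function.comp_assoc, insertTwo_comp_skipTwo, hfh]

end InsertTwo

section ExtFun

variable {k n : ℕ}

theorem extFun_of_ne_zero_of_le (α : Fin k → Fin n) {i : ℕ} (h0 : i ≠ 0) (hk : i ≤ k) :
    extFun α i = (α ⟨i - 1, by omega⟩ : ℕ) + 1 := by
  simp [extFun, h0, hk]

theorem lt_of_extFun_lt {α : Fin k → Fin n} (hα : Monotone α) {i : ℕ} {x : Fin n}
    (h : extFun α i < (x : ℕ) + 1) (j : Fin k) (hj : (j : ℕ) < i) : α j < x := by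
  have hjk := j.isLt
  have hik : i ≤ k := by
    by_contra hik
    simp only [extFun, show i ≠ 0 by omega, hik, dite_false] at h
    omega
  rw [extFun_of_ne_zero_of_le α (by omega) hik] at h
  have : α j ≤ α ⟨i - 1, by omega⟩ := hα (Fin.mk_le_mk.mpr (by omega))
  simp only [Fin.lt_def, Fin.le_def] at this ⊢
  omega

theorem lt_of_lt_extFun_succ {α : Fin k → Fin n} (hα : Monotone α) {i : ℕ} {y : Fin n}
    (h : (y : ℕ) + 1 < extFun α (i + 1)) (j : Fin k) (hj : i ≤ j) : y < α j := by
  have hjk := j.isLt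
  rw [extFun_of_ne_zero_of_le α (by omega) (by omega)] at h
  have : α ⟨i + 1 - 1, by omega⟩ ≤ α j := hα (Fin.mk_le_mk.mpr (by omega))
  simp only [Fin.lt_def, Fin.le_def] at this ⊢
  omega

end ExtFun

theorem forced_decreasing_in_box_general {l m n : ℕ}
    (π : Equiv.Perm (Fin l)) (σ : Equiv.Perm (Fin m))
    (R : Finset (ℕ × ℕ)) (a b : Fin (m + 1))
    (hcont : ContainsPat (⇑π) (insertAscent σ a b))
    (ρ : Equiv.Perm (Fin n)) (hρ : ¬ ContainsPat (⇑π) (⇑ρ))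
    (α β : Fin m → Fin n) (hocc : MeshOcc σ R ρ α β) :
    ∀ x y : Fin n,
      (extFun α a < (x : ℕ) + 1 ∧ (x : ℕ) + 1 < extFun α ((a : ℕ) + 1) ∧
        extFun β b < (ρ x : ℕ) + 1 ∧ (ρ x : ℕ) + 1 < extFun β ((b : ℕ) + 1)) →
      (extFun α a < (y : ℕ) + 1 ∧ (y : ℕ) + 1 < extFun α ((a : ℕ) + 1) ∧
        extFun β b < (ρ y : ℕ) + 1 ∧ (ρ y : ℕ) + 1 < extFun β ((b : ℕ) + 1)) →
      x < y → ρ y < ρ x := by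
  intro x y hx hy hxy
  by_contra hyx
  have hρxy : ρ x < ρ y := (not_lt.mp hyx).lt_of_ne (ρ.injective.ne hxy.ne)
  obtain ⟨hα, hβ, hσ, -⟩ := hocc
  obtain ⟨γ, hγ, hπ⟩ := hcont
  have hA : StrictMono (insertTwo a x y α) := strictMono_insertTwo hα a hxy
    (lt_of_extFun_lt hα.monotone hx.1) (lt_of_lt_extFun_succ hα.monotone hy.2.1)
  have hB : StrictMono (insertTwo b (ρ x) (ρ y) β) := strictMono_insertTwo hβ b hρxy
    (lt_of_extFun_lt hβ.monotone hx.2.2.1) (lt_of_lt_extFun_succ hβ.monotone hy.2.2.2)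
  have hcomm := congrFun (insertTwo_comp_insertAscent σ a b ρ α β (funext hσ) x y)
  refine hρ ⟨insertTwo a x y α ∘ γ, hA.comp hγ, fun i j => ?_⟩
  rw [hπ, ← hB.lt_iff_lt]
  simp only [Function.comp_apply] at hcomm ⊢
  rw [hcomm, hcomm]

/-- If the pattern obtained by inserting an ascent into box `⟨a,b⟩` of the mesh
pattern `(σ, R)` contains the classical pattern `π`, then in any occurrence of
`(σ, R)` in a `π`-avoiding permutation `ρ`, the points of `ρ` in the region
corresponding to `⟨a,b⟩` form a decreasing subsequence. -/
theorem forced_decreasing_in_box {l m n : ℕ}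
    (π : Equiv.Perm (Fin l)) (σ : Equiv.Perm (Fin m))
    (R : Finset (ℕ × ℕ)) (a b : Fin (m + 1))
    (hab : ((a : ℕ), (b : ℕ)) ∉ R)
    (hcont : ContainsPat (⇑π) (insertAscent σ a b))
    (ρ : Equiv.Perm (Fin n)) (hρ : ¬ ContainsPat (⇑π) (⇑ρ))
    (α β : Fin m → Fin n) (hocc : MeshOcc σ R ρ α β) :
    ∀ x y : Fin n,
      (extFun α a < (x : ℕ) + 1 ∧ (x : ℕ) + 1 < extFun α ((a : ℕ) + 1) ∧
        extFun β b < (ρ x : ℕ) + 1 ∧ (ρ x : ℕ) + 1 < extFun β ((b : ℕ) + 1)) →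
      (extFun α a < (y : ℕ) + 1 ∧ (y : ℕ) + 1 < extFun α ((a : ℕ) + 1) ∧
        extFun β b < (ρ y : ℕ) + 1 ∧ (ρ y : ℕ) + 1 < extFun β ((b : ℕ) + 1)) →
      x < y → ρ y < ρ x :=
  forced_decreasing_in_box_general π σ R a b hcont ρ hρ α β hocc
end

section
/- The number of permutations of length n ≥ 1 avoiding both 231 and the mesh pattern (1, {⟨0,0⟩,⟨0,1⟩,⟨1,1⟩}) equals C_n − C_{n−1}, where C_n is the n-th Catalan number. Equivalently, the generating function is 1 + x·C(x)·(C(x)−1) where C(x) = 1 + x·C(x)². -/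
/-- `π` avoids the classical pattern 231. -/
def Avoids231 {n : ℕ} (π : Equiv.Perm (Fin n)) : Prop :=
  ¬ ∃ i j k : Fin n, i < j ∧ j < k ∧ π k < π i ∧ π i < π j
/-!
A 231-avoiding permutation with its maximum at position `p` is the direct sum `σ ⊕ (1 ⊖ ρ)`
of a 231-avoider `σ` of length `p` and the skew sum of the one-point permutation with a
231-avoider `ρ` of length `n - 1 - p`: the maximum cannot play the role of the `3` in an
occurrence, so every entry left of it is smaller than every entry right of it. Conversely
every such sum avoids 231, so the avoiders satisfy the Catalan recursion.

The mesh pattern `(1, {⟨0,0⟩,⟨0,1⟩,⟨1,1⟩})` occurs exactly when the permutation starts with its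
maximum, and the 231-avoiders starting with their maximum are the `1 ⊖ ρ`, counted by
`C_{n-1}`.
-/

open Equiv Fin

lemma card_and_not_add_card_and {α : Type*} [Finite α] (p q : α → Prop) :
    Nat.card {x // p x ∧ ¬ q x} + Nat.card {x // p x ∧ q x} = Nat.card {x // p x} := by
  classical
  rw [← Nat.card_congr (Equiv.sumCompl fun x : {x // p x} => q x), Nat.card_sum, add_comm,
    Nat.card_congr (Equiv.subtypeSubtypeEquivSubtypeInter p q),
    Nat.card_congr (Equiv.subtypeSubtypeEquivSubtypeInter p fun x => ¬ q x)]

namespace Equiv.Perm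

variable {a b n : ℕ}

def directSum (σ : Perm (Fin a)) (τ : Perm (Fin b)) : Perm (Fin (a + b)) :=
  finSumFinEquiv.permCongr (σ.sumCongr τ)

@[simp]
lemma directSum_castAdd (σ : Perm (Fin a)) (τ : Perm (Fin b)) (i : Fin a) :
    directSum σ τ (castAdd b i) = castAdd b (σ i) := by
  simp [directSum, permCongr_apply]

@[simp]
lemma directSum_natAdd (σ : Perm (Fin a)) (τ : Perm (Fin b)) (j : Fin b) :
    directSum σ τ (natAdd a j) = natAdd a (τ j) := by
  simp [directSum, permCongr_apply]

lemma directSum_inj {σ σ' : Perm (Fin a)} {τ τ' : Perm (Fin b)} :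
    directSum σ τ = directSum σ' τ' ↔ σ = σ' ∧ τ = τ' := by
  refine ⟨fun h => ⟨Equiv.ext fun i => ?_, Equiv.ext fun j => ?_⟩, fun ⟨hσ, hτ⟩ => hσ ▸ hτ ▸ rfl⟩
  · simpa using congr($h (castAdd b i))
  · simpa using congr($h (natAdd a j))

lemma exists_directSum_eq {π : Perm (Fin (a + b))} (h : ∀ i : Fin a, (π (castAdd b i) : ℕ) < a) :
    ∃ σ τ, directSum σ τ = π := by
  have hσ : Function.Injective fun i => (⟨π (castAdd b i), h i⟩ : Fin a) := fun i j hij => by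
    simpa using π.injective (Fin.ext (Fin.mk.inj_iff.mp hij))
  set σ : Perm (Fin a) := .ofBijective _ (Finite.injective_iff_bijective.mp hσ)
  -- the first block already takes every value below `a`
  have hge (j : Fin b) : a ≤ (π (natAdd a j) : ℕ) := by
    by_contra! hlt
    obtain ⟨i, hi⟩ := σ.surjective ⟨_, hlt⟩
    have := π.injective (Fin.ext (Fin.mk.inj_iff.mp hi))
    exact absurd congr(($this : ℕ)) (by simp only [val_castAdd, val_natAdd]; omega)
  have hτ : Function.Injective fun j =>
      (⟨π (natAdd a j) - a, by have := (π (natAdd a j)).isLt; have := hge j; omega⟩ : Fin b) :=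
    fun i j hij => by
      have hi := hge i; have hj := hge j
      simp only [Fin.mk.injEq] at hij
      simpa using π.injective (Fin.ext (show (π (natAdd a i) : ℕ) = π (natAdd a j) by omega))
  refine ⟨σ, .ofBijective _ (Finite.injective_iff_bijective.mp hτ), Equiv.ext fun i => ?_⟩
  cases i using Fin.addCases with
  | left i => simp [σ]
  | right j => ext; simp [hge j]

/-- The skew sum `1 ⊖ ρ`: the maximum followed by `ρ`. -/
def consMax (ρ : Perm (Fin n)) : Perm (Fin (n + 1)) where
  toFun := Fin.cases (last n) fun i => (ρ i).castSucc
  invFun := Fin.lastCases 0 fun j => (ρ.symm j).succ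
  left_inv i := by cases i using Fin.cases <;> simp
  right_inv j := by cases j using Fin.lastCases <;> simp

@[simp]
lemma consMax_zero (ρ : Perm (Fin n)) : consMax ρ 0 = last n := rfl

@[simp]
lemma consMax_succ (ρ : Perm (Fin n)) (i : Fin n) : consMax ρ i.succ = (ρ i).castSucc := rfl

lemma consMax_injective : Function.Injective (consMax (n := n)) := fun ρ ρ' h =>
  Equiv.ext fun i => by simpa using congr($h i.succ)

lemma exists_consMax_eq {π : Perm (Fin (n + 1))} (h : π 0 = last n) : ∃ ρ, consMax ρ = π := by
  have hne (i : Fin n) : π i.succ ≠ last n := h ▸ π.injective.ne (succ_ne_zero i)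
  have hinj : Function.Injective fun i => (π i.succ).castPred (hne i) := fun i j hij => by
    simpa using π.injective (castPred_inj.mp hij)
  refine ⟨.ofBijective _ (Finite.injective_iff_bijective.mp hinj), ?_⟩
  ext i
  cases i using Fin.cases <;> simp [h]

end Equiv.Perm

open Equiv.Perm

section Avoidance

variable {a b m n : ℕ}

lemma Avoids231.of_strictMono {π : Perm (Fin n)} {σ : Perm (Fin m)} (hπ : Avoids231 π)
    {f g : Fin m → Fin n} (hf : StrictMono f) (hg : StrictMono g) (h : ∀ i, π (f i) = g (σ i)) :
    Avoids231 σ := fun ⟨i, j, k, hij, hjk, hki, hij'⟩ =>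
  hπ ⟨f i, f j, f k, hf hij, hf hjk, by simpa [h] using hg hki, by simpa [h] using hg hij'⟩

lemma avoids231_directSum {σ : Perm (Fin a)} {τ : Perm (Fin b)} :
    Avoids231 (directSum σ τ) ↔ Avoids231 σ ∧ Avoids231 τ := by
  refine ⟨fun h => ⟨h.of_strictMono (strictMono_castAdd b) (strictMono_castAdd b) (by simp),
    h.of_strictMono (strictMono_natAdd a) (strictMono_natAdd a) (by simp)⟩, ?_⟩
  rintro ⟨hσ, hτ⟩ ⟨i, j, k, hij, hjk, hki, hij'⟩
  induction i using Fin.addCases <;> induction j using Fin.addCases <;>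
    induction k using Fin.addCases <;>
    simp only [directSum_castAdd, directSum_natAdd, (strictMono_castAdd b).lt_iff_lt,
      (strictMono_natAdd a).lt_iff_lt] at hij hjk hki hij'
  · exact hσ ⟨_, _, _, hij, hjk, hki, hij'⟩
  all_goals first
    | exact hτ ⟨_, _, _, hij, hjk, hki, hij'⟩
    | simp only [Fin.lt_def, val_castAdd, val_natAdd] at *; omega

lemma avoids231_consMax {ρ : Perm (Fin n)} : Avoids231 (consMax ρ) ↔ Avoids231 ρ := by
  refine ⟨fun h => h.of_strictMono strictMono_succ strictMono_castSucc (by simp), ?_⟩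
  rintro hρ ⟨i, j, k, hij, hjk, hki, hij'⟩
  cases i using Fin.cases with
  | zero => exact (consMax ρ j).le_last.not_gt (by simpa using hij')
  | succ i =>
    obtain ⟨j, rfl⟩ := exists_succ_eq.mpr (Fin.ne_zero_of_lt hij)
    obtain ⟨k, rfl⟩ := exists_succ_eq.mpr (Fin.ne_zero_of_lt hjk)
    simp only [succ_lt_succ_iff, consMax_succ, castSucc_lt_castSucc_iff] at hij hjk hki hij'
    exact hρ ⟨i, j, k, hij, hjk, hki, hij'⟩

lemma Avoids231.val_lt_of_lt_of_apply_eq_last {π : Perm (Fin (n + 1))} (hπ : Avoids231 π)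
    {p i : Fin (n + 1)} (hp : π p = last n) (hi : i < p) : (π i : ℕ) < p := by
  have hip : π i < π p := hp ▸ lt_of_le_of_ne (le_last _) (hp ▸ π.injective.ne hi.ne)
  have hlt : ∀ j ∈ Finset.Ici p, π j ∈ Finset.Ioi (π i) := by
    intro j hj
    rw [Finset.mem_Ici] at hj
    rw [Finset.mem_Ioi]
    rcases hj.eq_or_lt with rfl | hpj
    · exact hip
    · by_contra! hji
      exact hπ ⟨i, p, j, hi, hpj, hji.lt_of_ne (π.injective.ne (hi.trans hpj).ne'), hip⟩
  have := Finset.card_le_card_of_injOn π hlt π.injective.injOn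
  simp only [card_Ici, card_Ioi] at this
  omega

end Avoidance

lemma card_avoids231_apply_eq_last (n : ℕ) (p : Fin (n + 1)) :
    Nat.card {π : Perm (Fin (n + 1)) // Avoids231 π ∧ π p = last n} =
      Nat.card {σ : Perm (Fin p) // Avoids231 σ} *
        Nat.card {ρ : Perm (Fin (n - p)) // Avoids231 ρ} := by
  obtain ⟨k, hk⟩ := p
  obtain ⟨q, rfl⟩ := Nat.exists_eq_add_of_le (Nat.le_of_lt_succ hk)
  change Nat.card {π : Perm (Fin (k + q + 1)) //
      Avoids231 π ∧ π (natAdd k (0 : Fin (q + 1))) = last (k + q)} =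
    Nat.card {σ : Perm (Fin k) // Avoids231 σ} * Nat.card {ρ : Perm (Fin (k + q - k)) // Avoids231 ρ}
  rw [Nat.add_sub_cancel_left, ← Nat.card_prod]
  symm
  refine Nat.card_eq_of_bijective
    (fun x => ⟨(directSum x.1.1 (consMax x.2.1) : Perm (Fin (k + (q + 1)))),
      avoids231_directSum.2 ⟨x.1.2, avoids231_consMax.2 x.2.2⟩, by rw [directSum_natAdd]; rfl⟩)
    ⟨?_, ?_⟩
  · rintro ⟨⟨σ, hσ⟩, ⟨ρ, hρ⟩⟩ ⟨⟨σ', hσ'⟩, ⟨ρ', hρ'⟩⟩ h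
    have h' : directSum σ (consMax ρ) = directSum σ' (consMax ρ') := congrArg Subtype.val h
    obtain ⟨rfl, hρρ'⟩ := directSum_inj.1 h'
    cases consMax_injective hρρ'
    rfl
  · rintro ⟨π, hπ, hmax⟩
    obtain ⟨σ, τ, rfl⟩ := exists_directSum_eq (a := k) (b := q + 1) (π := π)
      fun i => hπ.val_lt_of_lt_of_apply_eq_last hmax (by simp [Fin.lt_def])
    have hτ : τ 0 = last q := by
      rw [directSum_natAdd] at hmax
      ext
      simpa [Fin.ext_iff] using hmax
    obtain ⟨ρ, rfl⟩ := exists_consMax_eq hτ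
    obtain ⟨hσ, hρ⟩ := avoids231_directSum.1 hπ
    exact ⟨(⟨σ, hσ⟩, ⟨ρ, avoids231_consMax.1 hρ⟩), rfl⟩

lemma card_avoids231_succ (n : ℕ) :
    Nat.card {π : Perm (Fin (n + 1)) // Avoids231 π} =
      ∑ p : Fin (n + 1), Nat.card {π : Perm (Fin (n + 1)) // Avoids231 π ∧ π p = last n} := by
  rw [← Nat.card_congr (Equiv.sigmaFiberEquiv
    fun π : {π : Perm (Fin (n + 1)) // Avoids231 π} => π.1.symm (last n)), Nat.card_sigma]
  refine Finset.sum_congr rfl fun p _ => Nat.card_congr ?_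
  exact (Equiv.subtypeSubtypeEquivSubtypeInter Avoids231 fun π => π.symm (last n) = p).trans
    (Equiv.subtypeEquivRight fun π : Perm (Fin (n + 1)) =>
      and_congr_right fun _ => π.symm_apply_eq.trans eq_comm)

theorem card_avoids231 (n : ℕ) : Nat.card {π : Perm (Fin n) // Avoids231 π} = catalan n := by
  induction n using Nat.strong_induction_on with
  | _ n ih =>
  cases n with
  | zero =>
    rw [catalan_zero, Nat.card_eq_one_iff_exists]
    exact ⟨⟨1, fun ⟨i, _⟩ => i.elim0⟩, fun _ => Subsingleton.elim _ _⟩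
  | succ n =>
    rw [card_avoids231_succ, catalan_succ]
    refine Finset.sum_congr rfl fun p _ => ?_
    rw [card_avoids231_apply_eq_last, ih _ (by omega), ih _ (by omega)]

lemma meshOcc_one_iff {n : ℕ} (π : Perm (Fin n)) (α β : Fin 1 → Fin n) :
    MeshOcc (1 : Perm (Fin 1)) {(0,0),(0,1),(1,1)} π α β ↔
      π (α 0) = β 0 ∧ (∀ x < α 0, π x = β 0) ∧ ∀ x, α 0 < x → π x ≤ β 0 := by
  simp only [MeshOcc, Subsingleton.strictMono, Finset.mem_insert, Finset.mem_singleton,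
    forall_eq_or_imp, forall_eq]
  simp [extFun, eq_comm (a := π _), le_antisymm_iff (a := β 0), imp_and, forall_and, and_assoc]

lemma containsMesh_one_iff {m : ℕ} (π : Perm (Fin (m + 1))) :
    ContainsMesh (1 : Perm (Fin 1)) {(0,0),(0,1),(1,1)} π ↔ π 0 = last m := by
  simp only [ContainsMesh, meshOcc_one_iff]
  constructor
  · rintro ⟨α, β, hαβ, hleft, hright⟩
    have hα : α 0 = 0 := by
      by_contra h
      exact h (π.injective ((hleft 0 (Fin.pos_iff_ne_zero.2 h)).trans hαβ.symm)).symm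
    rw [hα] at hαβ hright
    have hmax : π (π.symm (last m)) ≤ π 0 := by
      rcases eq_zero_or_pos (π.symm (last m)) with h | h
      · rw [h]
      · exact hαβ ▸ hright _ h
    rwa [apply_symm_apply, last_le_iff] at hmax
  · exact fun h => ⟨fun _ => 0, fun _ => last m, h, fun x hx => absurd hx (not_lt_zero x),
      fun x _ => le_last _⟩

/-- The number of permutations of length `n ≥ 1` avoiding 231 and the mesh
pattern `(1, {⟨0,0⟩,⟨0,1⟩,⟨1,1⟩})` is `C_n - C_{n-1}`. -/
theorem card_av231_mesh_not_start_max (n : ℕ) (hn : 1 ≤ n) :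
    Nat.card {π : Equiv.Perm (Fin n) // Avoids231 π ∧
        AvoidsMesh (1 : Equiv.Perm (Fin 1)) ({(0,0),(0,1),(1,1)} : Finset (ℕ × ℕ)) π} =
      catalan n - catalan (n - 1) := by
  obtain ⟨m, rfl⟩ : ∃ m, n = m + 1 := ⟨n - 1, by omega⟩
  simp only [AvoidsMesh, containsMesh_one_iff, Nat.add_sub_cancel]
  have hsplit := card_and_not_add_card_and Avoids231 fun π : Perm (Fin (m + 1)) => π 0 = last m
  have hstart := card_avoids231_apply_eq_last m 0
  simp only [card_avoids231, val_zero, catalan_zero, Nat.sub_zero, one_mul] at hsplit hstart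
  omega
end

section
/- Let m₁ = (12, {⟨0,2⟩,⟨2,0⟩,⟨2,1⟩}) and m₂ = (12, {⟨0,2⟩,⟨1,0⟩,⟨2,0⟩,⟨2,1⟩}). A permutation avoiding 231 avoids m₁ if and only if it avoids m₂. -/
/-! An occurrence `(a, b)` of `m₁` has every point to the right of `b` above `π b`. Replace `a` by
the lowest point `c` of `[a, b)` that lies weakly below `π a`: by minimality the box `⟨1,0⟩` of
`(c, b)` is empty, and a point to the left of `c` above `π b` lies either to the left of `a`, which
the box `⟨0,2⟩` of `(a, b)` excludes, or strictly between `a` and `c`, where it forms a `231` with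
`a` and `c`. -/

def BoxEmpty {n : ℕ} (π : Equiv.Perm (Fin n)) (a b : Fin n) (p : ℕ × ℕ) : Prop :=
  ∀ x : Fin n,
    ¬(extFun ![a, b] p.1 < (x : ℕ) + 1 ∧ (x : ℕ) + 1 < extFun ![a, b] (p.1 + 1) ∧
      extFun ![π a, π b] p.2 < (π x : ℕ) + 1 ∧ (π x : ℕ) + 1 < extFun ![π a, π b] (p.2 + 1))

theorem ContainsMesh.mono {k n : ℕ} {τ : Equiv.Perm (Fin k)} {R S : Finset (ℕ × ℕ)}
    {π : Equiv.Perm (Fin n)} (hRS : R ⊆ S) (hS : ContainsMesh τ S π) : ContainsMesh τ R π :=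
  let ⟨α, β, hα, hβ, hτ, hbox⟩ := hS
  ⟨α, β, hα, hβ, hτ, fun p hp => hbox p (hRS hp)⟩

theorem containsMesh_one_fin_two_iff {n : ℕ} (π : Equiv.Perm (Fin n)) (R : Finset (ℕ × ℕ)) :
    ContainsMesh (1 : Equiv.Perm (Fin 2)) R π ↔
      ∃ a b : Fin n, a < b ∧ π a < π b ∧ ∀ p ∈ R, BoxEmpty π a b p := by
  constructor
  · rintro ⟨α, β, hα, hβ, hτ, hbox⟩
    have hαβ : α = ![α 0, α 1] ∧ β = ![π (α 0), π (α 1)] := by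
      constructor <;> funext i <;> fin_cases i <;> simp [hτ]
    refine ⟨α 0, α 1, hα Fin.zero_lt_one, ?_, fun p hp => ?_⟩
    · simpa [hτ] using hβ Fin.zero_lt_one
    · simpa only [BoxEmpty, ← hαβ.1, ← hαβ.2] using hbox p hp
  · rintro ⟨a, b, hab, hv, hbox⟩
    refine ⟨![a, b], ![π a, π b], ?_, ?_, fun i => ?_, hbox⟩
    · exact Fin.strictMono_iff_lt_succ.2 fun i => by fin_cases i; exact hab
    · exact Fin.strictMono_iff_lt_succ.2 fun i => by fin_cases i; exact hv
    · fin_cases i <;> rfl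

section Boxes

variable {n : ℕ} (π : Equiv.Perm (Fin n)) (a b : Fin n)

theorem boxEmpty_zero_two_iff : BoxEmpty π a b (0, 2) ↔ ∀ x, x < a → π x ≤ π b := by
  simp [BoxEmpty, extFun, Fin.lt_def, Fin.le_def, -Fin.val_fin_lt, -Fin.val_fin_le]

theorem boxEmpty_one_zero_iff : BoxEmpty π a b (1, 0) ↔ ∀ x, a < x → x < b → π a ≤ π x := by
  simp [BoxEmpty, extFun, Fin.lt_def, Fin.le_def, -Fin.val_fin_lt, -Fin.val_fin_le]

theorem boxEmpty_two_zero_iff : BoxEmpty π a b (2, 0) ↔ ∀ x, b < x → π a ≤ π x := by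
  simp [BoxEmpty, extFun, Fin.lt_def, Fin.le_def, -Fin.val_fin_lt, -Fin.val_fin_le]

theorem boxEmpty_two_one_iff :
    BoxEmpty π a b (2, 1) ↔ ∀ x, b < x → π x ≤ π a ∨ π b ≤ π x := by
  refine forall_congr' fun x => ?_
  simp [extFun, Fin.lt_def, Fin.le_def, -Fin.val_fin_lt, -Fin.val_fin_le]
  omega

theorem boxEmpty_two_zero_and_two_one_iff (hab : a < b) (hv : π a < π b) :
    BoxEmpty π a b (2, 0) ∧ BoxEmpty π a b (2, 1) ↔ ∀ x, b < x → π b ≤ π x := by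
  rw [boxEmpty_two_zero_iff, boxEmpty_two_one_iff, ← forall_and]
  refine forall_congr' fun x => ⟨fun ⟨h20, h21⟩ hbx => ?_, fun h => ⟨fun hbx => ?_, fun hbx => ?_⟩⟩
  · refine (h21 hbx).resolve_left fun hxa => ?_
    have : x = a := π.injective (le_antisymm hxa (h20 hbx))
    exact (hab.trans hbx).ne' this
  · exact hv.le.trans (h hbx)
  · exact .inr (h hbx)

end Boxes

theorem Avoids231.exists_left_end_empty_below_middle {n : ℕ} {π : Equiv.Perm (Fin n)}
    (h231 : Avoids231 π) {a b : Fin n} (hab : a < b) (hv : π a < π b)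
    (hleft : ∀ x, x < a → π x ≤ π b) :
    ∃ c, c < b ∧ π c < π b ∧ (∀ x, x < c → π x ≤ π b) ∧ (∀ x, c < x → x < b → π c ≤ π x) := by
  classical
  obtain ⟨c, hcS, hcmin⟩ := (Finset.univ.filter fun y => a ≤ y ∧ y < b ∧ π y ≤ π a).exists_min_image
    (fun y => π y) ⟨a, by simp [hab]⟩
  simp only [Finset.mem_filter, Finset.mem_univ, true_and] at hcS hcmin
  obtain ⟨hac, hcb, hca⟩ := hcS
  refine ⟨c, hcb, hca.trans_lt hv, fun x hxc => ?_, fun x hcx hxb => ?_⟩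
  · by_contra! hbx
    rcases lt_trichotomy x a with hxa | rfl | hax
    · exact (hleft x hxa).not_gt hbx
    · exact hv.not_gt hbx
    · have hca' : π c < π a := hca.lt_of_ne (π.injective.ne (hax.trans hxc).ne')
      exact h231 ⟨a, x, c, hax, hxc, hca', hv.trans hbx⟩
  · by_contra! hxc
    exact (hcmin x ⟨hac.trans hcx.le, hxb, (hxc.trans_le hca).le⟩).not_gt hxc

/-- Under the dominating pattern 231, the mesh patterns
`(12, {⟨0,2⟩,⟨2,0⟩,⟨2,1⟩})` and `(12, {⟨0,2⟩,⟨1,0⟩,⟨2,0⟩,⟨2,1⟩})` are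
coincident. -/
theorem coincidence_231_12_patterns {n : ℕ} (π : Equiv.Perm (Fin n))
    (h : Avoids231 π) :
    AvoidsMesh (1 : Equiv.Perm (Fin 2)) ({(0,2),(2,0),(2,1)} : Finset (ℕ × ℕ)) π ↔
      AvoidsMesh (1 : Equiv.Perm (Fin 2)) ({(0,2),(1,0),(2,0),(2,1)} : Finset (ℕ × ℕ)) π := by
  rw [AvoidsMesh, AvoidsMesh, not_iff_not]
  refine ⟨fun h₁ => ?_, ContainsMesh.mono (by decide)⟩
  rw [containsMesh_one_fin_two_iff] at h₁ ⊢
  obtain ⟨a, b, hab, hv, hbox⟩ := h₁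
  have hright :=
    (boxEmpty_two_zero_and_two_one_iff π a b hab hv).1 ⟨hbox _ (by simp), hbox _ (by simp)⟩
  obtain ⟨c, hcb, hcv, hleft, hmid⟩ :=
    h.exists_left_end_empty_below_middle hab hv ((boxEmpty_zero_two_iff π a b).1 (hbox _ (by simp)))
  refine ⟨c, b, hcb, hcv, ?_⟩
  simp only [Finset.mem_insert, Finset.mem_singleton, forall_eq_or_imp, forall_eq]
  exact ⟨(boxEmpty_zero_two_iff π c b).2 hleft, (boxEmpty_one_zero_iff π c b).2 hmid,
    (boxEmpty_two_zero_and_two_one_iff π c b hcb hcv).2 hright⟩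
end
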